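/- arXiv:2507.07989 — 4 statements merged into one kernel-verified Lean document; each statement's English description precedes it below -/
import Mathlib

section
/- Let H be a Hilbert space and let e_1, ..., e_K be orthogonal projections on H with e_1 + ... + e_K = 1. Then for every positive (bounded, self-adjoint, positive semidefinite) operator x on H, x ≤ K · ∑_{j=1}^K e_j x e_j in the operator order (i.e., for every vector h, ⟨h, x h⟩ ≤ K ∑_j ⟨h, e_j x e_j h⟩). -/
/-!
Write `q v = re ⟪v, x v⟫`. Positivity of `x` makes `q` a nonnegative quadratic form, so
`2 re ⟪u, x v⟫ ≤ q u + q v`, and summing this over all pairs gives the convexity bound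
`q (∑ j, v j) ≤ K ∑ j, q (v j)`. Apply it to `v j = e j h`, whose sum is `h`, and note that
`⟪h, e j (x (e j h))⟫ = ⟪e j h, x (e j h)⟫` because `e j` is self-adjoint.
-/

open scoped InnerProductSpace
open RCLike Finset

namespace LinearMap.IsPositive

variable {𝕜 E : Type*} [RCLike 𝕜] [NormedAddCommGroup E] [InnerProductSpace 𝕜 E]
  {T : E →ₗ[𝕜] E}

theorem two_mul_re_inner_le (hT : T.IsPositive) (u v : E) :
    2 * re ⟪u, T v⟫_𝕜 ≤ re ⟪u, T u⟫_𝕜 + re ⟪v, T v⟫_𝕜 := by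
  have hnonneg := hT.re_inner_nonneg_right (u - v)
  have hswap : re ⟪v, T u⟫_𝕜 = re ⟪u, T v⟫_𝕜 := by
    rw [← hT.isSymmetric v u, inner_re_symm]
  simp only [map_sub, inner_sub_left, inner_sub_right] at hnonneg
  linarith

theorem re_inner_sum_le_card_mul {ι : Type*} (hT : T.IsPositive) (s : Finset ι) (v : ι → E) :
    re ⟪∑ i ∈ s, v i, T (∑ i ∈ s, v i)⟫_𝕜 ≤ #s * ∑ i ∈ s, re ⟪v i, T (v i)⟫_𝕜 := by
  set q : ι → ℝ := fun i ↦ re ⟪v i, T (v i)⟫_𝕜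
  have hexpand : re ⟪∑ i ∈ s, v i, T (∑ i ∈ s, v i)⟫_𝕜 =
      ∑ i ∈ s, ∑ j ∈ s, re ⟪v i, T (v j)⟫_𝕜 := by
    simp only [map_sum, sum_inner, inner_sum]
    exact sum_comm
  have hpairs : ∑ i ∈ s, ∑ j ∈ s, (q i + q j) = 2 * (#s * ∑ i ∈ s, q i) := by
    simp only [sum_add_distrib, sum_const, nsmul_eq_mul, ← mul_sum]
    ring
  have hbound : 2 * ∑ i ∈ s, ∑ j ∈ s, re ⟪v i, T (v j)⟫_𝕜 ≤ ∑ i ∈ s, ∑ j ∈ s, (q i + q j) := by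
    simp only [mul_sum]
    exact sum_le_sum fun i _ ↦ sum_le_sum fun j _ ↦ hT.two_mul_re_inner_le (v i) (v j)
  linarith

end LinearMap.IsPositive

/-- Pinching inequality: if `e 1, ..., e K` are orthogonal projections on a complex Hilbert
space summing to the identity, then every positive operator `x` satisfies
`x ≤ K · ∑ j, e j x e j` in the sense of quadratic forms. -/
theorem pinching_cp_index {H : Type*} [NormedAddCommGroup H] [InnerProductSpace ℂ H]
    [CompleteSpace H] (K : ℕ) (e : Fin K → (H →L[ℂ] H))
    (hproj : ∀ j, IsSelfAdjoint (e j) ∧ (e j) ∘L (e j) = e j)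
    (hsum : ∑ j, e j = 1)
    (x : H →L[ℂ] H) (hx : x.IsPositive) :
    ∀ h : H, (⟪h, x h⟫_ℂ).re ≤ (K : ℝ) * ∑ j, (⟪h, (e j) (x ((e j) h))⟫_ℂ).re := by
  intro h
  have hdecomp : ∑ j, e j h = h := by
    simpa using congrArg (fun T : H →L[ℂ] H ↦ T h) hsum
  have hcompress : ∀ j, ⟪h, e j (x (e j h))⟫_ℂ = ⟪e j h, x (e j h)⟫_ℂ := fun j ↦
    ((hproj j).1.isSymmetric h (x (e j h))).symm
  simpa only [hdecomp, hcompress, card_univ, Fintype.card_fin, ContinuousLinearMap.coe_coe,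
    RCLike.re_to_complex] using
    hx.toLinearMap.re_inner_sum_le_card_mul univ (fun j ↦ e j h)
end

section
/- Let d be a positive definite density matrix (tr d = 1) and x a positive semidefinite matrix on the same finite-dimensional space. Then lim_{p → ∞} ‖d^{1/(2p)} x d^{1/(2p)}‖_p = ‖x‖_∞, where ‖·‖_p is the Schatten p-norm and ‖x‖_∞ the operator norm. -/
/-! Conjugating `x` by `d^{1/(2p)}` multiplies its operator norm by a factor between
`λ_min^{1/p}` and `λ_max^{1/p}`, the extreme eigenvalues of `d` (the lower bound by conjugating
back with `d^{-1/(2p)}`), and both factors tend to `1`. The Schatten `p`-norm of an `n × n`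
matrix lies between its operator norm and `n^{1/p}` times it, and `n^{1/p}` tends to `1` as well. -/

open scoped ComplexOrder

variable {n : ℕ}

/-- The Schatten `p`-norm of a complex matrix via singular values. -/
noncomputable def schattenNorm (x : Matrix (Fin n) (Fin n) ℂ) (p : ℝ) : ℝ :=
  (∑ i, ((Matrix.posSemidef_conjTranspose_mul_self x).1.eigenvalues i) ^ (p / 2)) ^ (1 / p)

/-- The operator norm of a complex matrix: the largest singular value. -/
noncomputable def operNorm (x : Matrix (Fin n) (Fin n) ℂ) : ℝ :=
  ⨆ i, Real.sqrt ((Matrix.posSemidef_conjTranspose_mul_self x).1.eigenvalues i)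

/-- The real power `d^r` of a Hermitian matrix, via the functional calculus. -/
noncomputable def hermPow {d : Matrix (Fin n) (Fin n) ℂ} (hd : d.IsHermitian) (r : ℝ) :
    Matrix (Fin n) (Fin n) ℂ :=
  hd.cfc (fun t => t ^ r)

open scoped Matrix.Norms.L2Operator
open Filter Topology Matrix

section RpowSum

variable {ι : Type*} [Fintype ι] {s : ι → ℝ} {p : ℝ}

theorem iSup_le_rpow_sum_rpow (hs : ∀ i, 0 ≤ s i) (hp : 0 < p) :
    ⨆ i, s i ≤ (∑ i, s i ^ p) ^ (1 / p) := by
  have hsum : 0 ≤ ∑ i, s i ^ p := Finset.sum_nonneg fun i _ => Real.rpow_nonneg (hs i) p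
  refine Real.iSup_le (fun i => ?_) (Real.rpow_nonneg hsum _)
  calc s i = (s i ^ p) ^ (1 / p) := by
        rw [← Real.rpow_mul (hs i), mul_one_div_cancel hp.ne', Real.rpow_one]
    _ ≤ (∑ i, s i ^ p) ^ (1 / p) := Real.rpow_le_rpow (Real.rpow_nonneg (hs i) p)
      (Finset.single_le_sum (fun j _ => Real.rpow_nonneg (hs j) p) (Finset.mem_univ i))
      (by positivity)

theorem rpow_sum_rpow_le_card_rpow_mul_iSup (hs : ∀ i, 0 ≤ s i) (hp : 0 < p) :
    (∑ i, s i ^ p) ^ (1 / p) ≤ (Fintype.card ι : ℝ) ^ (1 / p) * ⨆ i, s i := by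
  have hS : 0 ≤ ⨆ i, s i := Real.iSup_nonneg hs
  calc (∑ i, s i ^ p) ^ (1 / p) ≤ (∑ _i : ι, (⨆ i, s i) ^ p) ^ (1 / p) := by
        gcongr with i
        · exact Finset.sum_nonneg fun i _ => Real.rpow_nonneg (hs i) p
        · exact hs i
        · exact le_ciSup (Finite.bddAbove_range s) i
    _ = (Fintype.card ι : ℝ) ^ (1 / p) * ⨆ i, s i := by
      rw [Finset.sum_const, Finset.card_univ, nsmul_eq_mul, Real.mul_rpow (Nat.cast_nonneg _)
        (Real.rpow_nonneg hS p), ← Real.rpow_mul hS, mul_one_div_cancel hp.ne', Real.rpow_one]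

end RpowSum

namespace Matrix.IsHermitian

variable {m : Type*} [Fintype m] [DecidableEq m] {A : Matrix m m ℂ}

theorem norm_cfc_le_iff (hA : A.IsHermitian) (f : ℝ → ℝ) {b : ℝ} (hb : 0 ≤ b) :
    ‖hA.cfc f‖ ≤ b ↔ ∀ i, |f (hA.eigenvalues i)| ≤ b := by
  rw [IsHermitian.cfc, Unitary.conjStarAlgAut_apply, ← Unitary.coe_star,
    CStarRing.norm_mul_coe_unitary _ (star _), CStarRing.norm_coe_unitary_mul, l2_opNorm_diagonal,
    pi_norm_le_iff_of_nonneg hb]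
  simp

theorem norm_le_iff (hA : A.IsHermitian) {b : ℝ} (hb : 0 ≤ b) :
    ‖A‖ ≤ b ↔ ∀ i, |hA.eigenvalues i| ≤ b := by
  have h := hA.norm_cfc_le_iff id hb
  rwa [show hA.cfc id = A from hA.spectral_theorem.symm] at h

end Matrix.IsHermitian

noncomputable def singularValue (y : Matrix (Fin n) (Fin n) ℂ) (i : Fin n) : ℝ :=
  √((posSemidef_conjTranspose_mul_self y).1.eigenvalues i)

theorem norm_le_iff_forall_singularValue_le (y : Matrix (Fin n) (Fin n) ℂ) {b : ℝ}
    (hb : 0 ≤ b) : ‖y‖ ≤ b ↔ ∀ i, singularValue y i ≤ b := by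
  have h := posSemidef_conjTranspose_mul_self y
  rw [mul_self_le_mul_self_iff (norm_nonneg y) hb, ← l2_opNorm_conjTranspose_mul_self,
    h.1.norm_le_iff (mul_nonneg hb hb)]
  simp only [singularValue, Real.sqrt_le_left hb, abs_of_nonneg (h.eigenvalues_nonneg _), sq]

theorem operNorm_eq_norm (y : Matrix (Fin n) (Fin n) ℂ) : operNorm y = ‖y‖ := by
  have hsv (i : Fin n) : 0 ≤ singularValue y i := Real.sqrt_nonneg _
  refine le_antisymm (Real.iSup_le ?_ (norm_nonneg y))
    ((norm_le_iff_forall_singularValue_le y (Real.iSup_nonneg hsv)).2 ?_)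
  · exact (norm_le_iff_forall_singularValue_le y (norm_nonneg y)).1 le_rfl
  · exact le_ciSup (Finite.bddAbove_range (singularValue y))

theorem schattenNorm_eq (y : Matrix (Fin n) (Fin n) ℂ) (p : ℝ) :
    schattenNorm y p = (∑ i, singularValue y i ^ p) ^ (1 / p) := by
  simp only [schattenNorm, singularValue, Real.sqrt_eq_rpow,
    ← Real.rpow_mul ((posSemidef_conjTranspose_mul_self y).eigenvalues_nonneg _),
    one_div_mul_eq_div]

theorem operNorm_le_schattenNorm (y : Matrix (Fin n) (Fin n) ℂ) {p : ℝ} (hp : 0 < p) :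
    operNorm y ≤ schattenNorm y p :=
  schattenNorm_eq y p ▸ iSup_le_rpow_sum_rpow (fun _ => Real.sqrt_nonneg _) hp

theorem schattenNorm_le (y : Matrix (Fin n) (Fin n) ℂ) {p : ℝ} (hp : 0 < p) :
    schattenNorm y p ≤ (n : ℝ) ^ (1 / p) * operNorm y := by
  have h := rpow_sum_rpow_le_card_rpow_mul_iSup (s := singularValue y)
    (fun _ => Real.sqrt_nonneg _) hp
  rw [Fintype.card_fin, ← schattenNorm_eq] at h
  exact h

section HermPow

variable {d : Matrix (Fin n) (Fin n) ℂ}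

theorem hermPow_mul_hermPow (hd : d.PosDef) (r s : ℝ) :
    hermPow hd.1 r * hermPow hd.1 s = hermPow hd.1 (r + s) := by
  simp only [hermPow, IsHermitian.cfc, ← map_mul, diagonal_mul_diagonal]
  congr
  ext i
  simp [← Complex.ofReal_mul, Real.rpow_add (hd.eigenvalues_pos i)]

theorem hermPow_zero (hd : d.IsHermitian) : hermPow hd 0 = 1 := by
  simp only [hermPow, IsHermitian.cfc, Real.rpow_zero, Function.comp_def, RCLike.ofReal_one]
  exact (congrArg _ diagonal_one).trans (map_one _)

theorem norm_hermPow_le (hd : d.PosDef) {r b : ℝ} (hb : 0 ≤ b)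
    (h : ∀ i, hd.1.eigenvalues i ^ r ≤ b) : ‖hermPow hd.1 r‖ ≤ b :=
  (hd.1.norm_cfc_le_iff _ hb).2 fun i => by
    rw [abs_of_pos (Real.rpow_pos_of_pos (hd.eigenvalues_pos i) r)]
    exact h i

theorem norm_hermPow_mul_mul_hermPow_le (hd : d.PosDef) (x : Matrix (Fin n) (Fin n) ℂ) {r K : ℝ}
    (hr : 0 ≤ r) (hK₀ : 0 ≤ K) (hK : ∀ i, hd.1.eigenvalues i ≤ K) :
    ‖hermPow hd.1 r * x * hermPow hd.1 r‖ ≤ K ^ (2 * r) * ‖x‖ := by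
  have hB : ‖hermPow hd.1 r‖ ≤ K ^ r := norm_hermPow_le hd (by positivity) fun i =>
    Real.rpow_le_rpow (hd.eigenvalues_pos i).le (hK i) hr
  calc ‖hermPow hd.1 r * x * hermPow hd.1 r‖
      ≤ ‖hermPow hd.1 r‖ * ‖x‖ * ‖hermPow hd.1 r‖ := norm_mul₃_le
    _ ≤ K ^ r * ‖x‖ * K ^ r := by gcongr
    _ = K ^ (2 * r) * ‖x‖ := by rw [two_mul, Real.rpow_add_of_nonneg hK₀ hr hr]; ring

theorem le_norm_hermPow_mul_mul_hermPow (hd : d.PosDef) (x : Matrix (Fin n) (Fin n) ℂ) {r k : ℝ}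
    (hr : 0 ≤ r) (hk₀ : 0 < k) (hk : ∀ i, k ≤ hd.1.eigenvalues i) :
    k ^ (2 * r) * ‖x‖ ≤ ‖hermPow hd.1 r * x * hermPow hd.1 r‖ := by
  set A := hermPow hd.1 r * x * hermPow hd.1 r
  have hC : ‖hermPow hd.1 (-r)‖ ≤ k ^ (-r) := norm_hermPow_le hd (by positivity) fun i =>
    Real.rpow_le_rpow_of_nonpos hk₀ (hk i) (neg_nonpos.2 hr)
  have hx : hermPow hd.1 (-r) * A * hermPow hd.1 (-r) = x := by
    calc _ = (hermPow hd.1 (-r) * hermPow hd.1 r) * x * (hermPow hd.1 r * hermPow hd.1 (-r)) :=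
          by simp only [A, mul_assoc]
      _ = x := by
          rw [hermPow_mul_hermPow hd, hermPow_mul_hermPow hd, neg_add_cancel, add_neg_cancel,
            hermPow_zero, one_mul, mul_one]
  calc k ^ (2 * r) * ‖x‖ ≤ k ^ (2 * r) * (k ^ (-r) * ‖A‖ * k ^ (-r)) := by
        gcongr
        calc ‖x‖ ≤ ‖hermPow hd.1 (-r)‖ * ‖A‖ * ‖hermPow hd.1 (-r)‖ :=
              hx ▸ norm_mul₃_le
          _ ≤ k ^ (-r) * ‖A‖ * k ^ (-r) := by gcongr
    _ = ‖A‖ := by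
        have : 0 < k ^ r := by positivity
        rw [two_mul, Real.rpow_add hk₀, Real.rpow_neg hk₀.le]
        field_simp

end HermPow

theorem tendsto_rpow_one_div_atTop {a : ℝ} (ha : 0 < a) :
    Tendsto (fun p : ℝ => a ^ (1 / p)) atTop (𝓝 1) := by
  simpa [one_div, Function.comp_def] using
    (Real.continuousAt_const_rpow ha.ne').tendsto.comp tendsto_inv_atTop_zero

theorem weighted_schatten_tendsto_general (d x : Matrix (Fin n) (Fin n) ℂ)
    (hd : d.PosDef) :
    Filter.Tendsto
      (fun p : ℝ => schattenNorm (hermPow hd.1 (1 / (2 * p)) * x * hermPow hd.1 (1 / (2 * p))) p)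
      Filter.atTop (nhds (operNorm x)) := by
  rcases isEmpty_or_nonempty (Fin n) with hn | hn
  · rw [operNorm, Real.iSup_of_isEmpty]
    refine tendsto_const_nhds.congr' ((eventually_gt_atTop 0).mono fun p hp => ?_)
    simp [schattenNorm, hp.ne']
  obtain ⟨imin, hmin⟩ := Finite.exists_min hd.1.eigenvalues
  obtain ⟨imax, hmax⟩ := Finite.exists_max hd.1.eigenvalues
  set k := hd.1.eigenvalues imin
  set K := hd.1.eigenvalues imax
  have hn₀ : (0 : ℝ) < n := Nat.cast_pos.2 (Fin.pos_iff_nonempty.2 hn)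
  have hexp (p : ℝ) : 2 * (1 / (2 * p)) = 1 / p := by ring
  have hlower : Tendsto (fun p : ℝ => k ^ (1 / p) * ‖x‖) atTop (𝓝 ‖x‖) := by
    simpa using (tendsto_rpow_one_div_atTop (hd.eigenvalues_pos imin)).mul_const ‖x‖
  have hupper :
      Tendsto (fun p : ℝ => (n : ℝ) ^ (1 / p) * (K ^ (1 / p) * ‖x‖)) atTop (𝓝 ‖x‖) := by
    simpa using (tendsto_rpow_one_div_atTop hn₀).mul
      ((tendsto_rpow_one_div_atTop (hd.eigenvalues_pos imax)).mul_const ‖x‖)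
  rw [operNorm_eq_norm]
  refine tendsto_of_tendsto_of_tendsto_of_le_of_le' hlower hupper ?_ ?_ <;>
    filter_upwards [eventually_gt_atTop 0] with p hp
  · calc k ^ (1 / p) * ‖x‖
          ≤ ‖hermPow hd.1 (1 / (2 * p)) * x * hermPow hd.1 (1 / (2 * p))‖ :=
          hexp p ▸ le_norm_hermPow_mul_mul_hermPow hd x (by positivity)
            (hd.eigenvalues_pos imin) hmin
      _ ≤ _ := operNorm_eq_norm _ ▸ operNorm_le_schattenNorm _ hp
  · calc _ ≤ (n : ℝ) ^ (1 / p) * operNorm _ := schattenNorm_le _ hp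
      _ ≤ (n : ℝ) ^ (1 / p) * (K ^ (1 / p) * ‖x‖) := by
        rw [operNorm_eq_norm, ← hexp p]
        gcongr
        exact norm_hermPow_mul_mul_hermPow_le hd x (by positivity)
          (hd.eigenvalues_pos imax).le hmax

/-- For a positive definite density matrix `d` (trace one) and a positive semidefinite
matrix `x`, the weighted norms `‖d^{1/(2p)} x d^{1/(2p)}‖_p` converge to `‖x‖_∞` as
`p → ∞`. -/
theorem weighted_schatten_tendsto (d x : Matrix (Fin n) (Fin n) ℂ)
    (hd : d.PosDef) (htr : d.trace = 1) (hx : x.PosSemidef) :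
    Filter.Tendsto
      (fun p : ℝ => schattenNorm (hermPow hd.1 (1 / (2 * p)) * x * hermPow hd.1 (1 / (2 * p))) p)
      Filter.atTop (nhds (operNorm x)) :=
  weighted_schatten_tendsto_general d x hd
end

section
/- Let D : [1, ∞) → ℝ be nondecreasing and continuous, and suppose D(1) < r < sup_{α} D(α). Then there exists α_0 ∈ (1, ∞) such that sup_{α > 1} ((α − 1)/α)·(r − D(α)) = sup_{α ∈ (1, α_0]} ((α − 1)/α)·(r − D(α)). -/
/-!
Beyond any `α₀ > 1` with `r < D α₀` every term `(α - 1) / α * (r - D α)` is nonpositive, by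
monotonicity. On `(1, α₀]` the terms are bounded below by `(α - 1) / α * (r - D α₀)`, which tends
to `0` as `α → 1⁺`, so the supremum over `(1, α₀]` is nonnegative and the terms beyond `α₀` do not
contribute to the supremum over `(1, ∞)`.
-/

open Set Filter Topology

theorem csSup_image_eq_of_nonpos_of_subset {ι : Type*} {f : ι → ℝ} {s t : Set ι} (hts : t ⊆ s)
    (hbdd : BddAbove (f '' s)) (ht : t.Nonempty) (hnonpos : ∀ x ∈ s \ t, f x ≤ 0)
    (hnonneg : 0 ≤ sSup (f '' t)) : sSup (f '' s) = sSup (f '' t) := by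
  have hbdd_t : BddAbove (f '' t) := hbdd.mono (image_mono hts)
  refine le_antisymm (csSup_le ((ht.mono hts).image f) ?_)
    (csSup_le_csSup hbdd (ht.image f) (image_mono hts))
  rintro _ ⟨x, hxs, rfl⟩
  by_cases hxt : x ∈ t
  · exact le_csSup hbdd_t (mem_image_of_mem f hxt)
  · exact (hnonpos x ⟨hxs, hxt⟩).trans hnonneg

section Hoeffding

variable {D : ℝ → ℝ} {r : ℝ}

theorem sub_one_div_self_mem_Icc {α : ℝ} (hα : 1 ≤ α) : (α - 1) / α ∈ Icc 0 1 :=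
  ⟨div_nonneg (by linarith) (by linarith), (div_le_one₀ (by linarith)).2 (by linarith)⟩

theorem bddAbove_hoeffding_image (hmono : MonotoneOn D (Ici 1)) :
    BddAbove ((fun α => (α - 1) / α * (r - D α)) '' Ioi 1) := by
  refine ⟨|r - D 1|, ?_⟩
  rintro _ ⟨α, hα, rfl⟩
  obtain ⟨hq0, hq1⟩ := sub_one_div_self_mem_Icc (le_of_lt hα)
  have hD : D 1 ≤ D α := hmono (mem_Ici.2 le_rfl) (mem_Ici.2 hα.le) hα.le
  calc (α - 1) / α * (r - D α) ≤ (α - 1) / α * |r - D 1| :=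
        mul_le_mul_of_nonneg_left ((by linarith : r - D α ≤ r - D 1).trans (le_abs_self _)) hq0
    _ ≤ |r - D 1| := mul_le_of_le_one_left (abs_nonneg _) hq1

theorem hoeffding_nonpos {α : ℝ} (hα : 1 ≤ α) (hr : r ≤ D α) : (α - 1) / α * (r - D α) ≤ 0 :=
  mul_nonpos_of_nonneg_of_nonpos (sub_one_div_self_mem_Icc hα).1 (by linarith)

theorem sSup_hoeffding_image_Ioc_nonneg (hmono : MonotoneOn D (Ici 1)) {b : ℝ} (hb : 1 < b) :
    0 ≤ sSup ((fun α => (α - 1) / α * (r - D α)) '' Ioc 1 b) := by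
  set g : ℝ → ℝ := fun α => (α - 1) / α * (r - D b)
  have hg : Tendsto g (𝓝[>] 1) (𝓝 0) := by
    have : ContinuousAt g 1 := by fun_prop (disch := norm_num)
    simpa [g] using this.tendsto.mono_left nhdsWithin_le_nhds
  have hbdd := (bddAbove_hoeffding_image (r := r) hmono).mono
    (image_mono (Ioc_subset_Ioi_self : Ioc 1 b ⊆ _))
  refine le_of_tendsto hg ?_
  filter_upwards [Ioc_mem_nhdsGT hb] with α hα
  have hD : D α ≤ D b := hmono (mem_Ici.2 hα.1.le) (mem_Ici.2 hb.le) hα.2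
  calc g α ≤ (α - 1) / α * (r - D α) :=
        mul_le_mul_of_nonneg_left (by linarith) (sub_one_div_self_mem_Icc hα.1.le).1
    _ ≤ _ := le_csSup hbdd (mem_image_of_mem _ hα)

end Hoeffding

theorem hoeffding_sup_compact_interval_general (D : ℝ → ℝ)
    (hmono : MonotoneOn D (Set.Ici 1))
    (r : ℝ) (hr2 : ∃ α₁, 1 ≤ α₁ ∧ r < D α₁) :
    ∃ α₀ ∈ Set.Ioi (1 : ℝ),
      sSup ((fun α => (α - 1) / α * (r - D α)) '' Set.Ioi 1) =
        sSup ((fun α => (α - 1) / α * (r - D α)) '' Set.Ioc 1 α₀) := by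
  obtain ⟨α₁, hα₁, hrα₁⟩ := hr2
  have hα₀ : 1 < α₁ + 1 := by linarith
  refine ⟨α₁ + 1, hα₀, csSup_image_eq_of_nonpos_of_subset Ioc_subset_Ioi_self
    (bddAbove_hoeffding_image hmono) (nonempty_Ioc.2 hα₀) ?_
    (sSup_hoeffding_image_Ioc_nonneg hmono hα₀)⟩
  rintro α ⟨hα, hαt⟩
  have hlt : α₁ + 1 < α := lt_of_not_ge fun h => hαt ⟨hα, h⟩
  exact hoeffding_nonpos (le_of_lt hα)
    (hrα₁.le.trans (hmono (mem_Ici.2 hα₁) (mem_Ici.2 (by linarith)) (by linarith)))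

/-- If `D` is nondecreasing and continuous on `[1, ∞)`, and `D 1 < r < sup_α D α`
(witnessed by some `α₁ ≥ 1` with `r < D α₁`), then the Hoeffding supremum over `α > 1`
is attained already over a bounded interval `(1, α₀]` for some `α₀ ∈ (1, ∞)`. -/
theorem hoeffding_sup_compact_interval (D : ℝ → ℝ)
    (hmono : MonotoneOn D (Set.Ici 1)) (hcont : ContinuousOn D (Set.Ici 1))
    (r : ℝ) (hr1 : D 1 < r) (hr2 : ∃ α₁, 1 ≤ α₁ ∧ r < D α₁) :
    ∃ α₀ ∈ Set.Ioi (1 : ℝ),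
      sSup ((fun α => (α - 1) / α * (r - D α)) '' Set.Ioi 1) =
        sSup ((fun α => (α - 1) / α * (r - D α)) '' Set.Ioc 1 α₀) :=
  hoeffding_sup_compact_interval_general D hmono r hr2
end

section
/- Let (X_n)_{n≥1} and (Y_n)_{n≥1} be sequences where X_n, Y_n : T_n → [0,1] are functions on a set T_n of 'tests', with the following product property: for all m, n there is a map T_m × T_n → T_{m+n}, (S, T) ↦ S⊗T, with X_{m+n}(S⊗T) = X_m(S)·X_n(T) and Y_{m+n}(S⊗T) = Y_m(S)·Y_n(T); and a unit test 1_n ∈ T_n with X_n(1_n) = Y_n(1_n) = 1 and closure under scalar multiplication by c ∈ (0,1] with X_n(cT) = c·X_n(T), Y_n(cT) = c·Y_n(T). Fix r > 0 and define b_n = inf { −(1/n)·log X_n(T) : T ∈ T_n, Y_n(T) ≤ e^{−n r} } (with b_n = +∞ if no such T exists). Then the limit lim_{n→∞} b_n exists in [0, ∞] and equals limsup_n b_n = liminf_n b_n. -/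
open Filter
open scoped ENNReal

/-- An abstract hypothesis-testing framework: for each number of copies `n` there is a set
of tests `T n`, with functionals `X n, Y n : T n → [0,1]` (the two states evaluated on
tests), a multiplicative tensor product of tests, unit tests, and rescaling of tests by
constants in `(0,1]`. -/
structure TestFramework where
  T : ℕ → Type
  X : ∀ n, T n → ℝ
  Y : ∀ n, T n → ℝ
  X_mem : ∀ n t, X n t ∈ Set.Icc (0 : ℝ) 1
  Y_mem : ∀ n t, Y n t ∈ Set.Icc (0 : ℝ) 1
  tensor : ∀ {m n}, T m → T n → T (m + n)
  X_tensor : ∀ {m n} (s : T m) (t : T n), X (m + n) (tensor s t) = X m s * X n t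
  Y_tensor : ∀ {m n} (s : T m) (t : T n), Y (m + n) (tensor s t) = Y m s * Y n t
  one : ∀ n, T n
  X_one : ∀ n, X n (one n) = 1
  Y_one : ∀ n, Y n (one n) = 1
  smul : ∀ {n}, ℝ → T n → T n
  X_smul : ∀ {n} (c : ℝ), 0 < c → c ≤ 1 → ∀ t : T n, X n (smul c t) = c * X n t
  Y_smul : ∀ {n} (c : ℝ), 0 < c → c ≤ 1 → ∀ t : T n, Y n (smul c t) = c * Y n t

/-- The value `-(1/n) log X_n(T)`, as an element of `[0, ∞]` (equal to `∞` when
`X_n(T) = 0`). -/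
noncomputable def testValue (F : TestFramework) (n : ℕ) (t : F.T n) : ℝ≥0∞ :=
  if F.X n t = 0 then ⊤ else ENNReal.ofReal (-(1 / (n : ℝ)) * Real.log (F.X n t))

/-- `b n = inf { -(1/n) log X_n(T) : Y_n(T) ≤ e^{-nr} }`, with `b n = ∞` if no test
satisfies the constraint. -/
noncomputable def bSeq (F : TestFramework) (r : ℝ) (n : ℕ) : ℝ≥0∞ :=
  sInf {z | ∃ t : F.T n, F.Y n t ≤ Real.exp (-(n : ℝ) * r) ∧ z = testValue F n t}

/-!
Fix an admissible test `t₀` on `n₀` copies. For `n = n₀ k + s` with `s < n₀`, the test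
`e^{-s r} · t₀^{⊗k} ⊗ 1_s` on `n` copies is again admissible, and its value is at most
`n₀ r / n + (value of t₀)`. Hence `limsup b_n ≤ b_{n₀}` for every `n₀ ≥ 1`, which forces
`limsup b_n ≤ liminf b_n`.
-/

open Topology

theorem Filter.limsup_eq_liminf_and_tendsto_of_limsup_le {α β : Type*} [CompleteLinearOrder α]
    [TopologicalSpace α] [OrderTopology α] {f : Filter β} [f.NeBot] {u : β → α}
    (h : ∀ᶠ n in f, limsup u f ≤ u n) :
    limsup u f = liminf u f ∧ Tendsto u f (𝓝 (limsup u f)) := by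
  have heq : limsup u f = liminf u f :=
    le_antisymm (le_liminf_of_le (by isBoundedDefault) h) liminf_le_limsup
  exact ⟨heq, tendsto_of_liminf_eq_limsup heq.symm rfl⟩

theorem exp_neg_mul_mem_Ioc {r : ℝ} (hr : 0 ≤ r) (s : ℕ) :
    Real.exp (-(s : ℝ) * r) ∈ Set.Ioc 0 1 :=
  ⟨Real.exp_pos _, Real.exp_le_one_iff.mpr (by nlinarith [s.cast_nonneg (α := ℝ)])⟩

namespace TestFramework

variable (F : TestFramework)

def pow {n₀ : ℕ} (t : F.T n₀) : ∀ k : ℕ, F.T (n₀ * k)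
  | 0 => F.one 0
  | k + 1 => F.tensor (pow t k) t

theorem X_pow {n₀ : ℕ} (t : F.T n₀) (k : ℕ) : F.X (n₀ * k) (F.pow t k) = F.X n₀ t ^ k := by
  induction k with
  | zero => exact F.X_one 0
  | succ k ih =>
    exact (F.X_tensor (F.pow t k) t).trans (by rw [ih, pow_succ] : _ = F.X n₀ t ^ (k + 1))

theorem Y_pow {n₀ : ℕ} (t : F.T n₀) (k : ℕ) : F.Y (n₀ * k) (F.pow t k) = F.Y n₀ t ^ k := by
  induction k with
  | zero => exact F.Y_one 0
  | succ k ih =>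
    exact (F.Y_tensor (F.pow t k) t).trans (by rw [ih, pow_succ] : _ = F.Y n₀ t ^ (k + 1))

/-- The blocked test `e^{-s r} · t^{⊗k} ⊗ 1_s`: the damping factor lets the `s` padding
unit tests meet their share of the constraint on `Y`. -/
noncomputable def block {n₀ : ℕ} (t : F.T n₀) (r : ℝ) (k s : ℕ) : F.T (n₀ * k + s) :=
  F.smul (Real.exp (-(s : ℝ) * r)) (F.tensor (F.pow t k) (F.one s))

variable {F}

theorem X_block {n₀ : ℕ} (t : F.T n₀) {r : ℝ} (hr : 0 ≤ r) (k s : ℕ) :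
    F.X _ (F.block t r k s) = Real.exp (-(s : ℝ) * r) * F.X n₀ t ^ k := by
  have hc := exp_neg_mul_mem_Ioc hr s
  rw [block, F.X_smul _ hc.1 hc.2, F.X_tensor, F.X_pow, F.X_one, mul_one]

theorem Y_block {n₀ : ℕ} (t : F.T n₀) {r : ℝ} (hr : 0 ≤ r) (k s : ℕ) :
    F.Y _ (F.block t r k s) = Real.exp (-(s : ℝ) * r) * F.Y n₀ t ^ k := by
  have hc := exp_neg_mul_mem_Ioc hr s
  rw [block, F.Y_smul _ hc.1 hc.2, F.Y_tensor, F.Y_pow, F.Y_one, mul_one]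

theorem Y_block_le {n₀ : ℕ} {t : F.T n₀} {r : ℝ} (hr : 0 ≤ r)
    (ht : F.Y n₀ t ≤ Real.exp (-(n₀ : ℝ) * r)) (k s : ℕ) :
    F.Y _ (F.block t r k s) ≤ Real.exp (-((n₀ * k + s : ℕ) : ℝ) * r) :=
  calc F.Y _ (F.block t r k s)
      ≤ Real.exp (-(s : ℝ) * r) * Real.exp (-(n₀ : ℝ) * r) ^ k := by
        rw [Y_block t hr]
        gcongr
        exact (F.Y_mem n₀ t).1
    _ = Real.exp (-((n₀ * k + s : ℕ) : ℝ) * r) := by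
        rw [← Real.exp_nat_mul, ← Real.exp_add]
        push_cast
        ring_nf

end TestFramework

open TestFramework

theorem testValue_of_pos (F : TestFramework) {n : ℕ} {t : F.T n} (h : 0 < F.X n t) :
    testValue F n t = ENNReal.ofReal (-Real.log (F.X n t) / n) := by
  rw [testValue, if_neg h.ne', neg_mul, one_div_mul_eq_div, neg_div]

theorem testValue_block_le {F : TestFramework} {n₀ : ℕ} (hn₀ : 0 < n₀) (t : F.T n₀) {r : ℝ}
    (hr : 0 ≤ r) (k : ℕ) {s : ℕ} (hs : s ≤ n₀) (hn : 0 < n₀ * k + s) :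
    testValue F _ (F.block t r k s)
      ≤ ENNReal.ofReal (n₀ * r / (n₀ * k + s : ℕ)) + testValue F n₀ t := by
  rcases (F.X_mem n₀ t).1.eq_or_lt with hx | hx
  · simp [testValue, ← hx]
  set x := F.X n₀ t
  set N : ℝ := ((n₀ * k + s : ℕ) : ℝ)
  have hN : 0 < N := by positivity
  have hlog : -Real.log x / n₀ * n₀ = -Real.log x := div_mul_cancel₀ _ (by positivity)
  have hlog_nonneg : 0 ≤ -Real.log x / n₀ :=
    div_nonneg (neg_nonneg.mpr (Real.log_nonpos hx.le (F.X_mem n₀ t).2)) n₀.cast_nonneg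
  have hkN : (k : ℝ) * n₀ ≤ N := by simp only [N]; push_cast; nlinarith [s.cast_nonneg (α := ℝ)]
  have hX : 0 < F.X _ (F.block t r k s) := by rw [X_block t hr]; positivity
  rw [testValue_of_pos F hX, testValue_of_pos F hx, X_block t hr, ← ENNReal.ofReal_add
    (by positivity) hlog_nonneg, Real.log_mul (Real.exp_pos _).ne' (pow_pos hx k).ne',
    Real.log_exp, Real.log_pow]
  refine ENNReal.ofReal_le_ofReal ?_
  rw [div_add' _ _ _ hN.ne', div_le_div_iff_of_pos_right hN]
  have hs' : (s : ℝ) ≤ n₀ := by exact_mod_cast hs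
  nlinarith [mul_le_mul_of_nonneg_left hkN hlog_nonneg, mul_le_mul_of_nonneg_right hs' hr]

theorem bSeq_le_testValue {F : TestFramework} {r : ℝ} {n : ℕ} {t : F.T n}
    (ht : F.Y n t ≤ Real.exp (-(n : ℝ) * r)) : bSeq F r n ≤ testValue F n t :=
  sInf_le ⟨t, ht, rfl⟩

theorem bSeq_le_add_testValue {F : TestFramework} {r : ℝ} (hr : 0 ≤ r) {n₀ : ℕ} (hn₀ : 0 < n₀)
    {t : F.T n₀} (ht : F.Y n₀ t ≤ Real.exp (-(n₀ : ℝ) * r)) {n : ℕ} (hn : 0 < n) :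
    bSeq F r n ≤ ENNReal.ofReal (n₀ * r / n) + testValue F n₀ t := by
  have h := (bSeq_le_testValue (Y_block_le hr ht (n / n₀) (n % n₀))).trans
    (testValue_block_le hn₀ t hr (n / n₀) (Nat.mod_lt n hn₀).le
      ((Nat.div_add_mod n n₀).symm ▸ hn))
  rwa [Nat.div_add_mod] at h

theorem limsup_bSeq_le {F : TestFramework} {r : ℝ} (hr : 0 ≤ r) {n₀ : ℕ} (hn₀ : 0 < n₀) :
    limsup (bSeq F r) atTop ≤ bSeq F r n₀ := by
  refine le_sInf ?_
  rintro _ ⟨t, ht, rfl⟩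
  have hbound : Tendsto (fun n : ℕ ↦ ENNReal.ofReal (n₀ * r / n) + testValue F n₀ t) atTop
      (𝓝 (testValue F n₀ t)) := by
    simpa using ((ENNReal.continuous_ofReal.tendsto 0).comp
      (tendsto_const_div_atTop_nhds_zero_nat (n₀ * r))).add_const (testValue F n₀ t)
  calc limsup (bSeq F r) atTop
      ≤ limsup (fun n : ℕ ↦ ENNReal.ofReal (n₀ * r / n) + testValue F n₀ t) atTop :=
        limsup_le_limsup ((eventually_gt_atTop 0).mono fun n hn ↦
          bSeq_le_add_testValue hr hn₀ ht hn)
    _ = testValue F n₀ t := hbound.limsup_eq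

/-- Existence of the limit defining the strong converse exponent: for `r > 0`, the
sequence `b n` converges in `[0, ∞]` and its limit equals both its limsup and liminf. -/
theorem bSeq_limit_exists (F : TestFramework) (r : ℝ) (hr : 0 < r) :
    limsup (bSeq F r) atTop = liminf (bSeq F r) atTop ∧
      Tendsto (bSeq F r) atTop (nhds (limsup (bSeq F r) atTop)) :=
  limsup_eq_liminf_and_tendsto_of_limsup_le <|
    (eventually_gt_atTop 0).mono fun _ hn ↦ limsup_bSeq_le hr.le hn
end
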